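/- Let F⊂ℝ be compact with Lebesgue measure zero and associated fractal string (l_j), the non-increasing enumeration of the lengths of bounded complementary intervals, and let D∈(0,1). If there exist constants 0<c₁<c₂ such that c₁ ≤ l_j j^{1/D} ≤ c₂ for all large j, then 0 < 𝓢̲^D(F) ≤ 𝓢̄^D(F) < ∞. -/

import Mathlib

open Filter Set Topology MeasureTheory Metric ENNReal

/-- `κ_t = π^{t/2} / Γ(1 + t/2)`. -/
noncomputable def kappa (t : ℝ) : ℝ := Real.pi ^ (t / 2) / Real.Gamma (1 + t / 2)

/-- `(l_j)` is the fractal string of the compact set `F ⊂ ℝ`: a non-increasing sequence of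
positive lengths of the (pairwise disjoint) bounded complementary open intervals of `F`. -/
def IsFractalString (F : Set ℝ) (l : ℕ → ℝ) : Prop :=
  Antitone l ∧ (∀ j, 0 < l j) ∧
  ∃ a b : ℕ → ℝ,
    Pairwise (Function.onFun Disjoint fun j => Set.Ioo (a j) (b j)) ∧
    (∀ j, a j < b j ∧ b j - a j = l j) ∧
    (convexHull ℝ F) \ F = ⋃ j, Set.Ioo (a j) (b j)

/-- Lower S-content of `F ⊂ ℝ`: `liminf_{r→0} 𝓗⁰(∂F_r)/((1−D)κ_{1−D} r^{−D})`. -/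
noncomputable def lowerSContent (F : Set ℝ) (D : ℝ) : ℝ≥0∞ :=
  Filter.liminf
    (fun r : ℝ => μH[(0 : ℝ)] (frontier (cthickening r F)) /
      ENNReal.ofReal ((1 - D) * kappa (1 - D) * r ^ (-D)))
    (𝓝[>] (0 : ℝ))

/-- Upper S-content of `F ⊂ ℝ`. -/
noncomputable def upperSContent (F : Set ℝ) (D : ℝ) : ℝ≥0∞ :=
  Filter.limsup
    (fun r : ℝ => μH[(0 : ℝ)] (frontier (cthickening r F)) /
      ENNReal.ofReal ((1 - D) * kappa (1 - D) * r ^ (-D)))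
    (𝓝[>] (0 : ℝ))

/-!
A bounded gap `(a_j, b_j)` of `F` with `l_j > 2r` puts the point `a_j + r` on `∂F_r`, while every
point of `∂F_r` is at distance exactly `r` from `F`, hence equals `min F - r`, `max F + r`, or
`a_j + r`, `b_j - r` for a gap with `l_j ≥ 2r`. So `𝓗⁰(∂F_r)` lies between `#{j : l_j > 2r}` and
`2 + 2 #{j : l_j ≥ 2r}`, and the string bounds make both counts comparable to `r^{-D}`.
-/

lemma hausdorffMeasure_zero_finset {X : Type*} [EMetricSpace X] [MeasurableSpace X] [BorelSpace X]
    (s : Finset X) : μH[0] (s : Set X) = s.card := by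
  rw [← sum_measure_singleton]
  simp

lemma kappa_pos {t : ℝ} (ht : -2 < t) : 0 < kappa t :=
  div_pos (Real.rpow_pos_of_pos Real.pi_pos _) (Real.Gamma_pos_of_pos (by linarith))

lemma ofReal_mul_div_ofReal_mul {A K t : ℝ} (hK : 0 < K) (ht : 0 < t) :
    ENNReal.ofReal (A * t) / ENNReal.ofReal (K * t) = ENNReal.ofReal (A / K) := by
  rw [← ENNReal.ofReal_div_of_pos (mul_pos hK ht), mul_div_mul_right _ _ ht.ne']

lemma lowerSContent_pos_of_eventually_le {F : Set ℝ} {D A : ℝ} (hD : D < 1) (hA : 0 < A)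
    (h : ∀ᶠ r in 𝓝[>] 0, ENNReal.ofReal (A * r ^ (-D)) ≤ μH[0] (frontier (cthickening r F))) :
    0 < lowerSContent F D := by
  have hK : 0 < (1 - D) * kappa (1 - D) := mul_pos (by linarith) (kappa_pos (by linarith))
  refine (ENNReal.ofReal_pos.2 (div_pos hA hK)).trans_le
    (le_liminf_of_le (by isBoundedDefault) ?_)
  filter_upwards [h, self_mem_nhdsWithin] with r hr (hr0 : 0 < r)
  rw [← ofReal_mul_div_ofReal_mul hK (Real.rpow_pos_of_pos hr0 _)]
  exact ENNReal.div_le_div_right hr _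

lemma upperSContent_lt_top_of_eventually_le {F : Set ℝ} {D B : ℝ} (hD : D < 1)
    (h : ∀ᶠ r in 𝓝[>] 0, μH[0] (frontier (cthickening r F)) ≤ ENNReal.ofReal (B * r ^ (-D))) :
    upperSContent F D < ⊤ := by
  have hK : 0 < (1 - D) * kappa (1 - D) := mul_pos (by linarith) (kappa_pos (by linarith))
  refine (limsup_le_of_le (by isBoundedDefault) ?_).trans_lt
    (ofReal_lt_top (r := B / ((1 - D) * kappa (1 - D))))
  filter_upwards [h, self_mem_nhdsWithin] with r hr (hr0 : 0 < r)
  rw [← ofReal_mul_div_ofReal_mul hK (Real.rpow_pos_of_pos hr0 _)]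
  exact ENNReal.div_le_div_right hr _

lemma mem_cthickening_iff_infDist_le {X : Type*} [PseudoMetricSpace X] {s : Set X} {r : ℝ}
    {x : X} (hs : s.Nonempty) (hr : 0 ≤ r) : x ∈ cthickening r s ↔ infDist x s ≤ r := by
  rw [mem_cthickening_iff, infDist, ← ENNReal.le_ofReal_iff_toReal_le (infEDist_ne_top hs) hr]

lemma infDist_eq_of_mem_frontier_cthickening {X : Type*} [PseudoMetricSpace X] {s : Set X}
    {r : ℝ} {x : X} (hr : 0 ≤ r) (hx : x ∈ frontier (cthickening r s)) : infDist x s = r := by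
  rw [infDist, (frontier_cthickening_subset s hx : infEDist x s = ENNReal.ofReal r),
    ENNReal.toReal_ofReal hr]

lemma disjoint_of_sdiff_eq_iUnion {α ι : Type*} {S F : Set α} {s : ι → Set α}
    (h : S \ F = ⋃ j, s j) (j : ι) : Disjoint (s j) F :=
  disjoint_sdiff_left.mono_left ((subset_iUnion s j).trans h.symm.subset)

lemma le_or_le_of_disjoint_Ioo {a b a' b' : ℝ} (h : Disjoint (Ioo a b) (Ioo a' b'))
    (hab : a < b) (hab' : a' < b') : b ≤ a' ∨ b' ≤ a := by
  by_contra! h'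
  rw [Ioo_disjoint_Ioo] at h
  exact h.not_gt (lt_min (max_lt hab h'.1) (max_lt h'.2 hab'))

lemma injective_of_pairwise_disjoint_Ioo {ι : Type*} {a b : ι → ℝ} (hab : ∀ j, a j < b j)
    (hdisj : Pairwise (Function.onFun Disjoint fun j => Ioo (a j) (b j))) :
    Function.Injective a := by
  intro j k hjk
  by_contra hne
  rcases le_or_le_of_disjoint_Ioo (hdisj hne) (hab j) (hab k) with h | h
  · linarith [hab j]
  · linarith [hab k]

lemma endpoints_mem_of_sdiff_eq_iUnion {ι : Type*} {S F : Set ℝ} {a b : ι → ℝ}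
    (hS : IsClosed S) (hab : ∀ j, a j < b j)
    (hdisj : Pairwise (Function.onFun Disjoint fun j => Ioo (a j) (b j)))
    (hgaps : S \ F = ⋃ j, Ioo (a j) (b j)) (j : ι) : a j ∈ F ∧ b j ∈ F := by
  have hIcc : Icc (a j) (b j) ⊆ S := by
    rw [← closure_Ioo (hab j).ne]
    exact closure_minimal ((subset_iUnion _ j).trans (hgaps.symm.subset.trans sdiff_subset)) hS
  -- A point of `Icc (a j) (b j)` outside `F` lies in an open gap `k ≠ j`, which then meets gap `j`.
  have hend : ∀ x ∈ Icc (a j) (b j), x ∉ Ioo (a j) (b j) → x ∈ F := by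
    intro x hxj hx
    by_contra hxF
    obtain ⟨k, hk⟩ := mem_iUnion.1 (hgaps.subset ⟨hIcc hxj, hxF⟩)
    have hkj : k ≠ j := by
      rintro rfl
      exact hx hk
    rcases le_or_le_of_disjoint_Ioo (hdisj hkj) (hab k) (hab j) with h | h
    · linarith [hk.2, hxj.1]
    · linarith [hk.1, hxj.2]
  exact ⟨hend _ (left_mem_Icc.2 (hab j).le) fun h => lt_irrefl _ h.1,
    hend _ (right_mem_Icc.2 (hab j).le) fun h => lt_irrefl _ h.2⟩

lemma convexHull_eq_Icc_of_isLeast_of_isGreatest {F : Set ℝ} {m M : ℝ} (hm : IsLeast F m)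
    (hM : IsGreatest F M) : convexHull ℝ F = Icc m M := by
  refine Subset.antisymm (convexHull_min (fun x hx => ⟨hm.2 hx, hM.2 hx⟩) (convex_Icc m M)) ?_
  rw [← segment_eq_Icc (hm.2 hM.1)]
  exact segment_subset_convexHull hm.1 hM.1

lemma IsFractalString.exists_gaps {F : Set ℝ} {l : ℕ → ℝ} (hF : IsCompact F)
    (hl : IsFractalString F l) :
    ∃ m M, IsLeast F m ∧ IsGreatest F M ∧ ∃ a b : ℕ → ℝ, Function.Injective a ∧
      (∀ j, a j ∈ F ∧ b j ∈ F ∧ b j - a j = l j) ∧ Icc m M \ F = ⋃ j, Ioo (a j) (b j) := by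
  obtain ⟨-, -, a, b, hdisj, hab, hgaps⟩ := hl
  have hFne : F.Nonempty := by
    obtain ⟨x, hx⟩ := nonempty_Ioo.2 (hab 0).1
    have hx_hull : x ∈ convexHull ℝ F := (hgaps.symm.subset (mem_iUnion_of_mem 0 hx)).1
    exact convexHull_nonempty_iff.1 ⟨x, hx_hull⟩
  obtain ⟨m, hm⟩ := hF.exists_isLeast hFne
  obtain ⟨M, hM⟩ := hF.exists_isGreatest hFne
  rw [convexHull_eq_Icc_of_isLeast_of_isGreatest hm hM] at hgaps
  have hmem := endpoints_mem_of_sdiff_eq_iUnion isClosed_Icc (fun j => (hab j).1) hdisj hgaps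
  exact ⟨m, M, hm, hM, a, b, injective_of_pairwise_disjoint_Ioo (fun j => (hab j).1) hdisj,
    fun j => ⟨(hmem j).1, (hmem j).2, (hab j).2⟩, hgaps⟩

lemma IsLeast.infDist_eq {F : Set ℝ} {m x : ℝ} (hm : IsLeast F m) (hx : x ≤ m) :
    infDist x F = m - x := by
  refine le_antisymm ((infDist_le_dist_of_mem hm.1).trans_eq ?_)
    ((le_infDist ⟨m, hm.1⟩).2 fun y hy => ?_)
  · rw [Real.dist_eq, abs_of_nonpos (by linarith)]
    ring
  · rw [Real.dist_eq, abs_of_nonpos (by linarith [hm.2 hy])]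
    linarith [hm.2 hy]

lemma IsGreatest.infDist_eq {F : Set ℝ} {M x : ℝ} (hM : IsGreatest F M) (hx : M ≤ x) :
    infDist x F = x - M := by
  refine le_antisymm ((infDist_le_dist_of_mem hM.1).trans_eq ?_)
    ((le_infDist ⟨M, hM.1⟩).2 fun y hy => ?_)
  · rw [Real.dist_eq, abs_of_nonneg (by linarith)]
  · rw [Real.dist_eq, abs_of_nonneg (by linarith [hM.2 hy])]
    linarith [hM.2 hy]

lemma infDist_eq_min_of_gap {F : Set ℝ} {a b x : ℝ} (ha : a ∈ F) (hb : b ∈ F)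
    (hgap : Disjoint (Ioo a b) F) (hx : x ∈ Ioo a b) : infDist x F = min (x - a) (b - x) := by
  obtain ⟨hax, hxb⟩ := hx
  refine le_antisymm (le_min ?_ ?_) ((le_infDist ⟨a, ha⟩).2 fun y hy => ?_)
  · exact (infDist_le_dist_of_mem ha).trans_eq (by rw [Real.dist_eq, abs_of_pos (by linarith)])
  · exact (infDist_le_dist_of_mem hb).trans_eq
      (by rw [Real.dist_eq, abs_sub_comm, abs_of_pos (by linarith)])
  · have hy' : y ≤ a ∨ b ≤ y := by
      by_contra! h
      exact disjoint_right.1 hgap hy h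
    rw [Real.dist_eq]
    rcases hy' with hy' | hy'
    · exact (min_le_left _ _).trans ((by linarith : x - a ≤ x - y).trans (le_abs_self _))
    · exact (min_le_right _ _).trans ((by linarith : b - x ≤ -(x - y)).trans (neg_le_abs _))

lemma add_mem_frontier_cthickening_of_gap {F : Set ℝ} {a b r : ℝ} (ha : a ∈ F) (hb : b ∈ F)
    (hgap : Disjoint (Ioo a b) F) (hr : 0 < r) (hrab : 2 * r < b - a) :
    a + r ∈ frontier (cthickening r F) := by
  have houtside : Ioo (a + r) (b - r) ⊆ (cthickening r F)ᶜ := fun x hx hxF => by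
    rw [mem_cthickening_iff_infDist_le ⟨a, ha⟩ hr.le,
      infDist_eq_min_of_gap ha hb hgap ⟨by linarith [hx.1], by linarith [hx.2]⟩] at hxF
    exact (lt_min (by linarith [hx.1]) (by linarith [hx.2])).not_ge hxF
  rw [frontier_eq_closure_inter_closure]
  refine ⟨subset_closure (mem_cthickening_of_dist_le _ a r F ha ?_), closure_mono houtside ?_⟩
  · rw [Real.dist_eq, add_sub_cancel_left, abs_of_pos hr]
  · rw [closure_Ioo (by linarith : a + r < b - r).ne]
    exact left_mem_Icc.2 (by linarith)

lemma eq_of_mem_frontier_cthickening {ι : Type*} {F : Set ℝ} {a b : ι → ℝ} {m M r x : ℝ}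
    (hm : IsLeast F m) (hM : IsGreatest F M) (ha : ∀ j, a j ∈ F) (hb : ∀ j, b j ∈ F)
    (hgaps : Icc m M \ F = ⋃ j, Ioo (a j) (b j)) (hr : 0 < r)
    (hx : x ∈ frontier (cthickening r F)) :
    x = m - r ∨ x = M + r ∨ ∃ j, 2 * r ≤ b j - a j ∧ (x = a j + r ∨ x = b j - r) := by
  have hdist := infDist_eq_of_mem_frontier_cthickening hr.le hx
  rcases le_or_gt x m with hxm | hmx
  · rw [hm.infDist_eq hxm] at hdist
    exact .inl (by linarith)
  rcases le_or_gt M x with hMx | hxM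
  · rw [hM.infDist_eq hMx] at hdist
    exact .inr (.inl (by linarith))
  have hxF : x ∉ F := fun hxF => by
    rw [infDist_zero_of_mem hxF] at hdist
    linarith
  obtain ⟨j, hj⟩ := mem_iUnion.1 (hgaps.subset ⟨⟨hmx.le, hxM.le⟩, hxF⟩)
  rw [infDist_eq_min_of_gap (ha j) (hb j) (disjoint_of_sdiff_eq_iUnion hgaps j) hj] at hdist
  rcases min_eq_iff.1 hdist with ⟨h, h'⟩ | ⟨h, h'⟩
  · exact .inr (.inr ⟨j, by linarith, .inl (by linarith)⟩)
  · exact .inr (.inr ⟨j, by linarith, .inr (by linarith)⟩)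

lemma card_le_hausdorffMeasure_frontier_cthickening {ι : Type*} {F : Set ℝ} {a b : ι → ℝ}
    {r : ℝ} (ha : ∀ j, a j ∈ F) (hb : ∀ j, b j ∈ F) (hgap : ∀ j, Disjoint (Ioo (a j) (b j)) F)
    (hinj : Function.Injective a) (hr : 0 < r) {s : Finset ι}
    (hs : ∀ j ∈ s, 2 * r < b j - a j) :
    (s.card : ℝ≥0∞) ≤ μH[0] (frontier (cthickening r F)) := by
  classical
  rw [← s.card_image_of_injective ((add_left_injective r).comp hinj),
    ← hausdorffMeasure_zero_finset]
  refine measure_mono ?_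
  rw [Finset.coe_image]
  rintro _ ⟨j, hj, rfl⟩
  exact add_mem_frontier_cthickening_of_gap (ha j) (hb j) (hgap j) hr (hs j hj)

lemma hausdorffMeasure_frontier_cthickening_le {ι : Type*} {F : Set ℝ} {a b : ι → ℝ}
    {m M r : ℝ} (hm : IsLeast F m) (hM : IsGreatest F M) (ha : ∀ j, a j ∈ F)
    (hb : ∀ j, b j ∈ F) (hgaps : Icc m M \ F = ⋃ j, Ioo (a j) (b j)) (hr : 0 < r)
    {s : Finset ι} (hs : ∀ j, 2 * r ≤ b j - a j → j ∈ s) :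
    μH[0] (frontier (cthickening r F)) ≤ 2 + 2 * s.card := by
  classical
  set T : Finset ℝ := {m - r, M + r} ∪ s.image (a · + r) ∪ s.image (b · - r)
  have hT : frontier (cthickening r F) ⊆ T := by
    intro x hx
    rw [Finset.mem_coe]
    rcases eq_of_mem_frontier_cthickening hm hM ha hb hgaps hr hx
      with rfl | rfl | ⟨j, hj, rfl | rfl⟩
    · simp [T]
    · simp [T]
    · exact Finset.mem_union_left _ (Finset.mem_union_right _ (Finset.mem_image_of_mem _ (hs j hj)))
    · exact Finset.mem_union_right _ (Finset.mem_image_of_mem _ (hs j hj))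
  have hcard : T.card ≤ 2 + 2 * s.card := by
    have := Finset.card_union_le ({m - r, M + r} ∪ s.image (a · + r)) (s.image (b · - r))
    have := Finset.card_union_le {m - r, M + r} (s.image (a · + r))
    have := s.card_image_le (f := (a · + r))
    have := s.card_image_le (f := (b · - r))
    have := Finset.card_le_two (a := m - r) (b := M + r)
    simp only [T]
    omega
  calc μH[0] (frontier (cthickening r F)) ≤ μH[0] (T : Set ℝ) := measure_mono hT
    _ = T.card := hausdorffMeasure_zero_finset T
    _ ≤ 2 + 2 * s.card := by exact_mod_cast hcard

lemma lt_of_le_mul_rpow_one_div {D c t x ε : ℝ} (hD : 0 < D) (ht : 0 < t) (hε : 0 < ε)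
    (hc0 : 0 ≤ c) (hc : c ≤ x * t ^ (1 / D)) (htc : t < (c / ε) ^ D) : ε < x := by
  rw [one_div] at hc
  have htD : 0 < t ^ D⁻¹ := Real.rpow_pos_of_pos ht _
  have hlt : t ^ D⁻¹ < c / ε := (Real.rpow_inv_lt_iff_of_pos ht.le (by positivity) hD).2 htc
  rw [lt_div_iff₀ hε] at hlt
  exact lt_of_mul_lt_mul_left (by linarith [mul_comm x (t ^ D⁻¹)]) htD.le

lemma le_div_rpow_of_mul_rpow_one_div_le {D c t x ε : ℝ} (hD : 0 < D) (ht : 0 ≤ t)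
    (hε : 0 < ε) (hc : x * t ^ (1 / D) ≤ c) (hεx : ε ≤ x) : t ≤ (c / ε) ^ D := by
  rw [one_div] at hc
  have htD : 0 ≤ t ^ D⁻¹ := Real.rpow_nonneg ht _
  have hle : t ^ D⁻¹ ≤ c / ε := by
    rw [le_div_iff₀ hε]
    nlinarith
  exact (Real.rpow_inv_le_iff_of_pos ht (htD.trans hle) hD).1 hle

lemma div_mul_rpow_eq {c s r D : ℝ} (hc : 0 ≤ c) (hs : 0 ≤ s) (hr : 0 < r) :
    (c / (s * r)) ^ D = (c / s) ^ D * r ^ (-D) := by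
  rw [← div_div, Real.div_rpow (div_nonneg hc hs) hr.le, Real.rpow_neg hr.le, div_eq_mul_inv]

lemma eventually_ofReal_rpow_neg_le_hausdorffMeasure {F : Set ℝ} {l : ℕ → ℝ} {c D : ℝ}
    (hF : IsCompact F) (hl : IsFractalString F l) (hD : 0 < D) (hc : 0 < c)
    (h : ∀ᶠ j : ℕ in atTop, c ≤ l j * (j : ℝ) ^ (1 / D)) :
    ∀ᶠ r in 𝓝[>] 0,
      ENNReal.ofReal ((c / 2) ^ D / 2 * r ^ (-D)) ≤ μH[0] (frontier (cthickening r F)) := by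
  obtain ⟨_, _, -, -, a, b, hinj, hab, hgaps⟩ := hl.exists_gaps hF
  obtain ⟨N, hN⟩ := eventually_atTop.1 (h.and (eventually_gt_atTop 0))
  set C := (c / 2) ^ D
  have hC : 0 < C := by positivity
  have hlarge : ∀ᶠ r in 𝓝[>] (0 : ℝ), 2 * N ≤ C * r ^ (-D) :=
    ((tendsto_rpow_neg_nhdsGT_zero (neg_lt_zero.2 hD)).const_mul_atTop hC).eventually_ge_atTop _
  filter_upwards [hlarge, self_mem_nhdsWithin] with r hrN (hr : 0 < r)
  set n := ⌈C * r ^ (-D)⌉₊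
  have hceil := Nat.le_ceil (C * r ^ (-D))
  have hNn : N ≤ n := by exact_mod_cast (show (N : ℝ) ≤ n by linarith [N.cast_nonneg (α := ℝ)])
  have hcount : ENNReal.ofReal (C / 2 * r ^ (-D)) ≤ (Finset.Ico N n).card := by
    rw [Nat.card_Ico, ← ENNReal.ofReal_natCast, Nat.cast_sub hNn]
    exact ENNReal.ofReal_le_ofReal (by linarith)
  refine hcount.trans (card_le_hausdorffMeasure_frontier_cthickening (fun j => (hab j).1)
    (fun j => (hab j).2.1) (disjoint_of_sdiff_eq_iUnion hgaps) hinj hr fun j hj => ?_)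
  obtain ⟨hjN, hjn⟩ := Finset.mem_Ico.1 hj
  rw [(hab j).2.2]
  refine lt_of_le_mul_rpow_one_div hD (by exact_mod_cast (hN j hjN).2) (by positivity) hc.le
    (hN j hjN).1 ?_
  rw [div_mul_rpow_eq hc.le zero_le_two hr]
  exact Nat.lt_ceil.1 hjn

lemma exists_eventually_hausdorffMeasure_le_ofReal_rpow_neg {F : Set ℝ} {l : ℕ → ℝ} {c D : ℝ}
    (hF : IsCompact F) (hl : IsFractalString F l) (hD : 0 < D) (hc : 0 ≤ c)
    (h : ∀ᶠ j : ℕ in atTop, l j * (j : ℝ) ^ (1 / D) ≤ c) :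
    ∃ B, ∀ᶠ r in 𝓝[>] 0,
      μH[0] (frontier (cthickening r F)) ≤ ENNReal.ofReal (B * r ^ (-D)) := by
  obtain ⟨m, M, hm, hM, a, b, -, hab, hgaps⟩ := hl.exists_gaps hF
  obtain ⟨N, hN⟩ := eventually_atTop.1 h
  set C := (c / 2) ^ D with hC_def
  have hC : 0 ≤ C := by positivity
  refine ⟨2 * N + 4 + 2 * C, ?_⟩
  filter_upwards [Ioo_mem_nhdsGT one_pos] with r ⟨hr, hr1⟩
  set n := N + ⌊C * r ^ (-D)⌋₊ + 1
  have hcount : ∀ j, 2 * r ≤ b j - a j → j ∈ Finset.range n := by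
    intro j hj
    rw [Finset.mem_range]
    rcases lt_or_ge j N with hjN | hjN
    · omega
    · have hjC := le_div_rpow_of_mul_rpow_one_div_le hD j.cast_nonneg (by positivity) (hN j hjN)
        ((hab j).2.2 ▸ hj)
      rw [div_mul_rpow_eq hc zero_le_two hr, ← hC_def] at hjC
      have := Nat.le_floor hjC
      omega
  have hrD : 1 ≤ r ^ (-D) := Real.one_le_rpow_of_pos_of_le_one_of_nonpos hr hr1.le (by linarith)
  have hfloor : (⌊C * r ^ (-D)⌋₊ : ℝ) ≤ C * r ^ (-D) := Nat.floor_le (by positivity)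
  refine (hausdorffMeasure_frontier_cthickening_le hm hM (fun j => (hab j).1)
    (fun j => (hab j).2.1) hgaps hr hcount).trans ?_
  rw [Finset.card_range, show (2 : ℝ≥0∞) + 2 * n = ((2 + 2 * n : ℕ) : ℝ≥0∞) by norm_cast,
    ← ENNReal.ofReal_natCast]
  exact ENNReal.ofReal_le_ofReal (by push_cast [n]; nlinarith)

theorem scontent_two_sided_of_string_bounds_general (F : Set ℝ) (hF : IsCompact F)
    (l : ℕ → ℝ) (hl : IsFractalString F l)
    (D : ℝ) (hD : D ∈ Set.Ioo (0 : ℝ) 1)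
    (hstring : ∃ c₁ c₂ : ℝ, 0 < c₁ ∧ c₁ < c₂ ∧
      ∀ᶠ j : ℕ in Filter.atTop, c₁ ≤ l j * (j : ℝ) ^ (1 / D) ∧ l j * (j : ℝ) ^ (1 / D) ≤ c₂) :
    0 < lowerSContent F D ∧ upperSContent F D < ⊤ := by
  obtain ⟨c₁, c₂, hc₁, hc₁₂, hbounds⟩ := hstring
  obtain ⟨B, hB⟩ := exists_eventually_hausdorffMeasure_le_ofReal_rpow_neg hF hl hD.1
    (hc₁.trans hc₁₂).le (hbounds.mono fun _ h => h.2)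
  refine ⟨lowerSContent_pos_of_eventually_le hD.2 (by positivity)
    (eventually_ofReal_rpow_neg_le_hausdorffMeasure hF hl hD.1 hc₁ (hbounds.mono fun _ h => h.1)),
    upperSContent_lt_top_of_eventually_le hD.2 hB⟩

theorem scontent_two_sided_of_string_bounds (F : Set ℝ) (hF : IsCompact F)
    (hF0 : volume F = 0) (l : ℕ → ℝ) (hl : IsFractalString F l)
    (D : ℝ) (hD : D ∈ Set.Ioo (0 : ℝ) 1)
    (hstring : ∃ c₁ c₂ : ℝ, 0 < c₁ ∧ c₁ < c₂ ∧
      ∀ᶠ j : ℕ in Filter.atTop, c₁ ≤ l j * (j : ℝ) ^ (1 / D) ∧ l j * (j : ℝ) ^ (1 / D) ≤ c₂) :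
    0 < lowerSContent F D ∧ upperSContent F D < ⊤ :=
  scontent_two_sided_of_string_bounds_general F hF l hl D hD hstring
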